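/- The function γ ↦ min_{q_{Y|X} : V(q_X^γ · q_{Y|X}, p_{XY}) ≤ ε} I(q_X^γ · q_{Y|X}) (with q_X^γ = (p_X(1)+γ, p_X(2)−γ)) need not be convex in γ: there exists a binary-binary joint distribution p_{XY} and ε ∈ (0,2) for which this function is neither convex nor concave on its domain. -/

import Mathlib

open Finset

/-- `p` is a probability mass function on a finite type. -/
def IsPMF {α : Type*} [Fintype α] (p : α → ℝ) : Prop :=
  (∀ a, 0 ≤ p a) ∧ ∑ a, p a = 1

/-- Variational (L¹) distance between two functions on a finite type. -/
def Vdist {α : Type*} [Fintype α] (p q : α → ℝ) : ℝ := ∑ a, |p a - q a|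

/-- `q` is a joint probability distribution (curried form). -/
def IsJointPMF {mx my : ℕ} (q : Fin mx → Fin my → ℝ) : Prop :=
  (∀ i j, 0 ≤ q i j) ∧ ∑ i, ∑ j, q i j = 1

/-- Variational (L¹) distance between two joint distributions. -/
def VdistJ {mx my : ℕ} (p q : Fin mx → Fin my → ℝ) : ℝ :=
  ∑ i, ∑ j, |p i j - q i j|

/-- Marginal distribution on X. -/
def margX {mx my : ℕ} (q : Fin mx → Fin my → ℝ) : Fin mx → ℝ := fun i => ∑ j, q i j

/-- Marginal distribution on Y. -/
def margY {mx my : ℕ} (q : Fin mx → Fin my → ℝ) : Fin my → ℝ := fun j => ∑ i, q i j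

/-- `w` is a conditional probability distribution of Y given X. -/
def IsCondDist {mx my : ℕ} (w : Fin mx → Fin my → ℝ) : Prop :=
  ∀ i, (∀ j, 0 ≤ w i j) ∧ ∑ j, w i j = 1

/-- Joint distribution induced by a marginal and a conditional distribution. -/
def jointOf {mx my : ℕ} (qX : Fin mx → ℝ) (w : Fin mx → Fin my → ℝ) :
    Fin mx → Fin my → ℝ := fun i j => qX i * w i j

/-- Mutual information of a joint distribution, with the convention 0·log 0 = 0. -/
noncomputable def mutualInfo {mx my : ℕ} (q : Fin mx → Fin my → ℝ) : ℝ :=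
  ∑ i, ∑ j, if q i j = 0 then 0 else q i j * Real.log (q i j / (margX q i * margY q j))

/-- Relative entropy (Kullback–Leibler divergence) with the convention 0·log(0/x) = 0. -/
noncomputable def relEntropy {α : Type*} [Fintype α] (p q : α → ℝ) : ℝ :=
  ∑ a, if p a = 0 then 0 else p a * Real.log (p a / q a)

/-!
At `γ = -1/4, ±1/10` the `ε`-ball around the witness `p = ![![1/20, 9/20], ![9/20, 1/20]]`
(with `ε = 3/4`) contains a product distribution with `X`-marginal `q_X^γ`, so the slice minimum
vanishes there. At `γ = 0` every feasible joint distribution has determinant at most `-1/80`.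
Summing `x log (x/m) - x + m ≥ (√x - √m)² ≥ (x - m)²/4` over the cells gives
`I(q) ≥ ¼ ∑ (q_ij - q_i q_j)²`, which for binary `X`, `Y` reads `I(q) ≥ det(q)²`; so the minimum
at `γ = 0` is at least `1/6400`. A function vanishing at `±1/10` but positive at their midpoint
is not convex; one vanishing at `-1/4` and `-1/10` but positive at `0` is not concave.
-/

open Finset Real

/-- `log t ≤ t - 1` at `t = √m / √x`. -/
lemma sq_sqrt_sub_sqrt_le_mul_log_div {x m : ℝ} (hx : 0 < x) (hm : 0 < m) :
    (√x - √m) ^ 2 ≤ x * log (x / m) - x + m := by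
  have ha : 0 < √x := sqrt_pos.mpr hx
  have hb : 0 < √m := sqrt_pos.mpr hm
  have hlog : log (x / m) = -2 * log (√m / √x) := by
    rw [log_div hx.ne' hm.ne', log_div hb.ne' ha.ne', log_sqrt hx.le, log_sqrt hm.le]; ring
  have hle : log (√m / √x) ≤ √m / √x - 1 := log_le_sub_one_of_pos (by positivity)
  have hx2 : x = √x ^ 2 := (sq_sqrt hx.le).symm
  have hm2 : m = √m ^ 2 := (sq_sqrt hm.le).symm
  calc (√x - √m) ^ 2 = x * (-2 * (√m / √x - 1)) - x + m := by
        rw [hx2, hm2, sqrt_sq ha.le, sqrt_sq hb.le]; field_simp; ring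
    _ ≤ x * log (x / m) - x + m := by
        rw [hlog]; linarith [mul_le_mul_of_nonneg_left (by linarith : -2 * (√m / √x - 1) ≤
          -2 * log (√m / √x)) hx.le]

lemma sq_sub_div_four_le_mul_log_div {x m : ℝ} (hx : 0 < x) (hm : 0 < m) (hx1 : x ≤ 1)
    (hm1 : m ≤ 1) : (x - m) ^ 2 / 4 ≤ x * log (x / m) - x + m := by
  have hsum : (√x + √m) ^ 2 ≤ 4 := by
    have := sqrt_le_one.mpr hx1
    have := sqrt_le_one.mpr hm1
    nlinarith [sqrt_nonneg x, sqrt_nonneg m]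
  have hfactor : (x - m) ^ 2 = (√x - √m) ^ 2 * (√x + √m) ^ 2 := by
    nth_rw 1 [← sq_sqrt hx.le, ← sq_sqrt hm.le]; ring
  have := sq_sqrt_sub_sqrt_le_mul_log_div hx hm
  nlinarith [sq_nonneg (√x - √m)]

lemma sq_sub_div_four_add_sub_le {x m : ℝ} (hx : 0 ≤ x) (hm : 0 ≤ m) (hx1 : x ≤ 1)
    (hm1 : m ≤ 1) (hpos : 0 < x → 0 < m) :
    (x - m) ^ 2 / 4 + (x - m) ≤ if x = 0 then 0 else x * log (x / m) := by
  rcases hx.eq_or_lt with rfl | hx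
  · simp only [if_true]; nlinarith
  · rw [if_neg hx.ne']
    linarith [sq_sub_div_four_le_mul_log_div hx (hpos hx) hx1 hm1]

namespace IsJointPMF

variable {mx my : ℕ} {q : Fin mx → Fin my → ℝ}

lemma sum_margX (hq : IsJointPMF q) : ∑ i, margX q i = 1 := hq.2

lemma sum_margY (hq : IsJointPMF q) : ∑ j, margY q j = 1 := by
  rw [← hq.2]; exact sum_comm

lemma le_margX (hq : IsJointPMF q) (i : Fin mx) (j : Fin my) : q i j ≤ margX q i :=
  single_le_sum (fun j _ => hq.1 i j) (mem_univ j)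

lemma le_margY (hq : IsJointPMF q) (i : Fin mx) (j : Fin my) : q i j ≤ margY q j :=
  single_le_sum (f := fun i => q i j) (fun i _ => hq.1 i j) (mem_univ i)

lemma margX_nonneg (hq : IsJointPMF q) (i : Fin mx) : 0 ≤ margX q i :=
  sum_nonneg fun j _ => hq.1 i j

lemma margY_nonneg (hq : IsJointPMF q) (j : Fin my) : 0 ≤ margY q j :=
  sum_nonneg fun i _ => hq.1 i j

lemma margX_le_one (hq : IsJointPMF q) (i : Fin mx) : margX q i ≤ 1 :=
  hq.sum_margX ▸ single_le_sum (fun i _ => hq.margX_nonneg i) (mem_univ i)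

lemma margY_le_one (hq : IsJointPMF q) (j : Fin my) : margY q j ≤ 1 :=
  hq.sum_margY ▸ single_le_sum (fun j _ => hq.margY_nonneg j) (mem_univ j)

lemma sum_sq_sub_margX_mul_margY_div_four_le_mutualInfo (hq : IsJointPMF q) :
    (∑ i, ∑ j, (q i j - margX q i * margY q j) ^ 2) / 4 ≤ mutualInfo q := by
  set m : Fin mx → Fin my → ℝ := fun i j => margX q i * margY q j
  have hm : ∑ i, ∑ j, m i j = 1 := by
    simp only [m, ← mul_sum, hq.sum_margY, mul_one, hq.sum_margX]
  have hcell : ∀ i j, (q i j - m i j) ^ 2 / 4 + (q i j - m i j) ≤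
      if q i j = 0 then 0 else q i j * log (q i j / m i j) := fun i j =>
    sq_sub_div_four_add_sub_le (hq.1 i j) (mul_nonneg (hq.margX_nonneg i) (hq.margY_nonneg j))
      ((hq.le_margX i j).trans (hq.margX_le_one i))
      (mul_le_one₀ (hq.margX_le_one i) (hq.margY_nonneg j) (hq.margY_le_one j))
      fun h => mul_pos (h.trans_le (hq.le_margX i j)) (h.trans_le (hq.le_margY i j))
  have hsum := sum_le_sum fun i (_ : i ∈ univ) => sum_le_sum fun j (_ : j ∈ univ) => hcell i j
  simp only [sum_add_distrib, sum_sub_distrib, ← sum_div, hq.2, hm, sub_self, add_zero] at hsum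
  exact hsum

lemma mutualInfo_nonneg (hq : IsJointPMF q) : 0 ≤ mutualInfo q :=
  (by positivity : (0 : ℝ) ≤ _).trans hq.sum_sq_sub_margX_mul_margY_div_four_le_mutualInfo

end IsJointPMF

lemma IsJointPMF.sq_det_le_mutualInfo {q : Fin 2 → Fin 2 → ℝ} (hq : IsJointPMF q) :
    (q 0 0 * q 1 1 - q 0 1 * q 1 0) ^ 2 ≤ mutualInfo q := by
  have hs : q 0 0 + q 0 1 + (q 1 0 + q 1 1) = 1 := by simpa [Fin.sum_univ_two] using hq.2
  have hdev : (∑ i, ∑ j, (q i j - margX q i * margY q j) ^ 2) =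
      4 * (q 0 0 * q 1 1 - q 0 1 * q 1 0) ^ 2 := by
    have e : ∀ i j, q i j - margX q i * margY q j =
        (if i = j then 1 else -1) * (q 0 0 * q 1 1 - q 0 1 * q 1 0) := by
      intro i j
      fin_cases i <;> fin_cases j <;> simp [margX, margY, Fin.sum_univ_two] <;>
        linear_combination (-q _ _) * hs
    simp only [e, Fin.sum_univ_two]
    norm_num
    ring
  linarith [hq.sum_sq_sub_margX_mul_margY_div_four_le_mutualInfo]

lemma IsPMF.isJointPMF_jointOf {mx my : ℕ} {u : Fin mx → ℝ} {w : Fin mx → Fin my → ℝ}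
    (hu : IsPMF u) (hw : IsCondDist w) : IsJointPMF (jointOf u w) :=
  ⟨fun i j => mul_nonneg (hu.1 i) ((hw i).1 j), by simp [jointOf, ← mul_sum, (hw _).2, hu.2]⟩

lemma mutualInfo_jointOf_const {mx my : ℕ} {u : Fin mx → ℝ} {r : Fin my → ℝ}
    (hu : ∑ i, u i = 1) (hr : ∑ j, r j = 1) : mutualInfo (jointOf u fun _ => r) = 0 := by
  have hX : ∀ i, margX (jointOf u fun _ => r) i = u i := fun i => by
    simp [margX, jointOf, ← mul_sum, hr]
  have hY : ∀ j, margY (jointOf u fun _ => r) j = r j := fun j => by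
    simp [margY, jointOf, ← sum_mul, hu]
  refine sum_eq_zero fun i _ => sum_eq_zero fun j _ => ?_
  split_ifs with h
  · rfl
  · rw [hX, hY]
    simp only [jointOf] at h ⊢
    rw [div_self h, log_one, mul_zero]

/-- Equal to `0` (as `sInf ∅`) when no channel is feasible. -/
noncomputable def minMutualInfo {mx my : ℕ} (p : Fin mx → Fin my → ℝ) (ε : ℝ)
    (qX : Fin mx → ℝ) : ℝ :=
  sInf {x | ∃ w : Fin mx → Fin my → ℝ, IsCondDist w ∧ VdistJ (jointOf qX w) p ≤ ε ∧
    x = mutualInfo (jointOf qX w)}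

section minMutualInfo

variable {mx my : ℕ} {p : Fin mx → Fin my → ℝ} {ε : ℝ} {qX : Fin mx → ℝ}

lemma le_minMutualInfo {c : ℝ} (hne : ∃ w, IsCondDist w ∧ VdistJ (jointOf qX w) p ≤ ε)
    (h : ∀ w, IsCondDist w → VdistJ (jointOf qX w) p ≤ ε → c ≤ mutualInfo (jointOf qX w)) :
    c ≤ minMutualInfo p ε qX := by
  obtain ⟨w, hw, hV⟩ := hne
  exact le_csInf ⟨_, w, hw, hV, rfl⟩ fun _ ⟨w, hw, hV, hx⟩ => hx ▸ h w hw hV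

lemma minMutualInfo_eq_zero {r : Fin my → ℝ} (hqX : IsPMF qX) (hr : IsPMF r)
    (hV : VdistJ (jointOf qX fun _ => r) p ≤ ε) : minMutualInfo p ε qX = 0 := by
  have hzero : (0 : ℝ) ∈ {x | ∃ w : Fin mx → Fin my → ℝ, IsCondDist w ∧
      VdistJ (jointOf qX w) p ≤ ε ∧ x = mutualInfo (jointOf qX w)} :=
    ⟨_, fun _ => hr, hV, (mutualInfo_jointOf_const hqX.2 hr.2).symm⟩
  refine le_antisymm (csInf_le ⟨0, ?_⟩ hzero) (le_minMutualInfo ⟨_, fun _ => hr, hV⟩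
    fun w hw _ => (hqX.isJointPMF_jointOf hw).mutualInfo_nonneg)
  rintro _ ⟨w, hw, -, rfl⟩
  exact (hqX.isJointPMF_jointOf hw).mutualInfo_nonneg

end minMutualInfo

/-- The `X`-marginal `q_X^γ = (p_X(1) + γ, p_X(2) - γ)`. -/
def tiltedMargX {my : ℕ} (p : Fin 2 → Fin my → ℝ) (γ : ℝ) : Fin 2 → ℝ :=
  fun i => if i = 0 then margX p 0 + γ else margX p 1 - γ

def sliceDomain {my : ℕ} (p : Fin 2 → Fin my → ℝ) (ε : ℝ) : Set ℝ :=
  {γ | IsPMF (tiltedMargX p γ) ∧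
    ∃ w : Fin 2 → Fin my → ℝ, IsCondDist w ∧ VdistJ (jointOf (tiltedMargX p γ) w) p ≤ ε}

lemma not_convexOn_of_pos_of_nonpos {s : Set ℝ} {f : ℝ → ℝ} {x y z : ℝ} (hx : x ∈ s)
    (hy : y ∈ s) (hz : z ∈ Set.Icc x y) (hfx : f x ≤ 0) (hfy : f y ≤ 0) (hfz : 0 < f z) :
    ¬ ConvexOn ℝ s f := fun hf =>
  (hf.le_on_segment hx hy (by rwa [segment_eq_Icc (hz.1.trans hz.2)])).not_gt
    ((max_le hfx hfy).trans_lt hfz)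

lemma not_concaveOn_of_nonpos_of_pos {s : Set ℝ} {f : ℝ → ℝ} {x y z : ℝ} (hx : x ∈ s)
    (hy : y ∈ s) (hz : z ∈ Set.Ioc x y) (hfx : 0 ≤ f x) (hfy : 0 < f y) (hfz : f z ≤ 0) :
    ¬ ConcaveOn ℝ s f := by
  intro hf
  have hxy : y - x ≠ 0 := (sub_pos.mpr (hz.1.trans_le hz.2)).ne'
  set a := (y - z) / (y - x)
  set b := (z - x) / (y - x)
  have ha : 0 ≤ a := div_nonneg (sub_nonneg.mpr hz.2) (sub_nonneg.mpr (hz.1.le.trans hz.2))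
  have hb : 0 < b := div_pos (sub_pos.mpr hz.1) (sub_pos.mpr (hz.1.trans_le hz.2))
  have hab : a + b = 1 := by simp only [a, b]; field_simp; ring
  have hcomb : a • x + b • y = z := by simp only [a, b, smul_eq_mul]; field_simp; ring
  have h := hf.2 hx hy ha hb.le hab
  rw [hcomb, smul_eq_mul, smul_eq_mul] at h
  nlinarith [mul_nonneg ha hfx, mul_pos hb hfy]

lemma isPMF_pair {a b : ℝ} (ha : 0 ≤ a) (hb : 0 ≤ b) (hab : a + b = 1) : IsPMF ![a, b] :=
  ⟨fun i => by fin_cases i <;> assumption, by simpa [Fin.sum_univ_two] using hab⟩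

noncomputable def witnessJoint : Fin 2 → Fin 2 → ℝ := ![![1/20, 9/20], ![9/20, 1/20]]

lemma isJointPMF_witnessJoint : IsJointPMF witnessJoint :=
  ⟨fun i j => by fin_cases i <;> fin_cases j <;> norm_num [witnessJoint],
    by norm_num [witnessJoint, Fin.sum_univ_two]⟩

lemma tiltedMargX_witnessJoint (γ : ℝ) :
    tiltedMargX witnessJoint γ = ![1/2 + γ, 1/2 - γ] := by
  ext i; fin_cases i <;> norm_num [tiltedMargX, margX, witnessJoint, Fin.sum_univ_two]

lemma vdistJ_jointOf_witnessJoint (u : Fin 2 → ℝ) (w : Fin 2 → Fin 2 → ℝ) :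
    VdistJ (jointOf u w) witnessJoint = |u 0 * w 0 0 - 1/20| + |u 0 * w 0 1 - 9/20| +
      (|u 1 * w 1 0 - 9/20| + |u 1 * w 1 1 - 1/20|) := by
  simp [VdistJ, jointOf, witnessJoint, Fin.sum_univ_two]

lemma mem_sliceDomain_witnessJoint_and_minMutualInfo_eq_zero {γ r : ℝ}
    (hγ : γ ∈ Set.Icc (-1/2) (1/2)) (hr : r ∈ Set.Icc 0 1)
    (hV : VdistJ (jointOf ![1/2 + γ, 1/2 - γ] fun _ => ![r, 1 - r]) witnessJoint ≤ 3/4) :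
    γ ∈ sliceDomain witnessJoint (3/4) ∧
      minMutualInfo witnessJoint (3/4) (tiltedMargX witnessJoint γ) = 0 := by
  have hq : IsPMF (tiltedMargX witnessJoint γ) := by
    rw [tiltedMargX_witnessJoint]
    exact isPMF_pair (by linarith [hγ.1]) (by linarith [hγ.2]) (by ring)
  have hr' : IsPMF ![r, 1 - r] := isPMF_pair hr.1 (by linarith [hr.2]) (by ring)
  rw [← tiltedMargX_witnessJoint] at hV
  exact ⟨⟨hq, _, fun _ => hr', hV⟩, minMutualInfo_eq_zero hq hr' hV⟩

lemma sub_le_of_vdistJ_jointOf_half_le {w : Fin 2 → Fin 2 → ℝ} (hw : IsCondDist w)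
    (hV : VdistJ (jointOf ![1/2, 1/2] w) witnessJoint ≤ 3/4) : w 0 0 - w 1 0 ≤ -1/20 := by
  have h0 : w 0 1 = 1 - w 0 0 := by linarith [(hw 0).2, Fin.sum_univ_two (w 0)]
  have h1 : w 1 1 = 1 - w 1 0 := by linarith [(hw 1).2, Fin.sum_univ_two (w 1)]
  rw [vdistJ_jointOf_witnessJoint, h0, h1] at hV
  simp only [Matrix.cons_val_zero, Matrix.cons_val_one] at hV
  linarith [le_abs_self (1/2 * w 0 0 - 1/20), neg_abs_le (1/2 * (1 - w 0 0) - 9/20),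
    neg_abs_le (1/2 * w 1 0 - 9/20), le_abs_self (1/2 * (1 - w 1 0) - 1/20)]

lemma zero_mem_sliceDomain_witnessJoint : (0 : ℝ) ∈ sliceDomain witnessJoint (3/4) := by
  refine ⟨?_, ![![1/10, 9/10], ![9/10, 1/10]], fun i => ?_, ?_⟩
  · rw [tiltedMargX_witnessJoint]; exact isPMF_pair (by norm_num) (by norm_num) (by norm_num)
  · fin_cases i <;> exact isPMF_pair (by norm_num) (by norm_num) (by norm_num)
  · rw [tiltedMargX_witnessJoint, vdistJ_jointOf_witnessJoint]; norm_num [abs_of_nonneg]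

lemma one_div_6400_le_minMutualInfo_witnessJoint :
    1/6400 ≤ minMutualInfo witnessJoint (3/4) (tiltedMargX witnessJoint 0) := by
  obtain ⟨hq, hne⟩ := zero_mem_sliceDomain_witnessJoint
  refine le_minMutualInfo hne fun w hw hV => ?_
  rw [tiltedMargX_witnessJoint, add_zero, sub_zero] at hq hV ⊢
  have hs0 : w 0 0 + w 0 1 = 1 := by simpa [Fin.sum_univ_two] using (hw 0).2
  have hs1 : w 1 0 + w 1 1 = 1 := by simpa [Fin.sum_univ_two] using (hw 1).2
  have hdet : jointOf ![1/2, 1/2] w 0 0 * jointOf ![1/2, 1/2] w 1 1 -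
      jointOf ![1/2, 1/2] w 0 1 * jointOf ![1/2, 1/2] w 1 0 = (w 0 0 - w 1 0) / 4 := by
    simp only [jointOf, Matrix.cons_val_zero, Matrix.cons_val_one]
    linear_combination (1/4 * w 0 0) * hs1 - (1/4 * w 1 0) * hs0
  have hgap := sub_le_of_vdistJ_jointOf_half_le hw hV
  calc (1 : ℝ) / 6400 ≤ ((w 0 0 - w 1 0) / 4) ^ 2 := by nlinarith
    _ ≤ mutualInfo (jointOf ![1/2, 1/2] w) :=
      hdet ▸ (hq.isJointPMF_jointOf hw).sq_det_le_mutualInfo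

/-- The function γ ↦ min over the conditional feasible set of the mutual
information need not be convex: there is a binary-binary p and ε ∈ (0,2) for which it is
neither convex nor concave on its domain. -/
theorem slice_min_not_convex_not_concave :
    ∃ (p : Fin 2 → Fin 2 → ℝ) (ε : ℝ), IsJointPMF p ∧ ε ∈ Set.Ioo (0 : ℝ) 2 ∧
      ¬ ConvexOn ℝ
          {γ : ℝ | IsPMF (fun i : Fin 2 => if i = 0 then margX p 0 + γ else margX p 1 - γ) ∧
            ∃ w : Fin 2 → Fin 2 → ℝ, IsCondDist w ∧
              VdistJ (jointOf (fun i => if i = 0 then margX p 0 + γ else margX p 1 - γ) w) p ≤ ε}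
          (fun γ => sInf {x : ℝ | ∃ w : Fin 2 → Fin 2 → ℝ, IsCondDist w ∧
            VdistJ (jointOf (fun i => if i = 0 then margX p 0 + γ else margX p 1 - γ) w) p ≤ ε ∧
            x = mutualInfo (jointOf (fun i => if i = 0 then margX p 0 + γ else margX p 1 - γ) w)}) ∧
      ¬ ConcaveOn ℝ
          {γ : ℝ | IsPMF (fun i : Fin 2 => if i = 0 then margX p 0 + γ else margX p 1 - γ) ∧
            ∃ w : Fin 2 → Fin 2 → ℝ, IsCondDist w ∧
              VdistJ (jointOf (fun i => if i = 0 then margX p 0 + γ else margX p 1 - γ) w) p ≤ ε}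
          (fun γ => sInf {x : ℝ | ∃ w : Fin 2 → Fin 2 → ℝ, IsCondDist w ∧
            VdistJ (jointOf (fun i => if i = 0 then margX p 0 + γ else margX p 1 - γ) w) p ≤ ε ∧
            x = mutualInfo (jointOf (fun i => if i = 0 then margX p 0 + γ else margX p 1 - γ) w)}) := by
  obtain ⟨hA, fA⟩ :=
    mem_sliceDomain_witnessJoint_and_minMutualInfo_eq_zero (γ := -1/4) (r := 3/5)
    (by norm_num) (by norm_num) (by rw [vdistJ_jointOf_witnessJoint]; norm_num [abs_le])
  obtain ⟨hB, fB⟩ :=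
    mem_sliceDomain_witnessJoint_and_minMutualInfo_eq_zero (γ := -1/10) (r := 3/4)
    (by norm_num) (by norm_num) (by rw [vdistJ_jointOf_witnessJoint]; norm_num [abs_le])
  obtain ⟨hD, fD⟩ :=
    mem_sliceDomain_witnessJoint_and_minMutualInfo_eq_zero (γ := 1/10) (r := 1/4)
    (by norm_num) (by norm_num) (by rw [vdistJ_jointOf_witnessJoint]; norm_num [abs_le])
  have fC : 0 < minMutualInfo witnessJoint (3/4) (tiltedMargX witnessJoint 0) :=
    lt_of_lt_of_le (by norm_num) one_div_6400_le_minMutualInfo_witnessJoint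
  refine ⟨witnessJoint, 3/4, isJointPMF_witnessJoint, by norm_num, ?_, ?_⟩
  · exact not_convexOn_of_pos_of_nonpos hB hD (z := 0) (by norm_num) fB.le fD.le fC
  · exact not_concaveOn_of_nonpos_of_pos hA zero_mem_sliceDomain_witnessJoint (z := -1/10)
      (by norm_num) fA.ge fC fB.le
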